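/- Local error bound for the SI process (Lemma 3A): suppose k ≥ 3 and 0 < h ≤ 1, and let A be a random edge-timer vector whose components (A(e))_{e∈E(G)} are independent exponential rate-1 random variables. Then for every state x, E[‖g̃(x,A) − g(x,A)‖₁] ≤ n·k²·e^{k−2}·h²; equivalently, the local error d₁ = (g̃(x,A) − g(x,A))/h satisfies E[‖d₁‖₁] ≤ C_SI·h with C_SI = n·k²·e^{k−2}. -/

import Mathlib

/-!
If the one-step DES and the DTS disagree at a node `j`, then `j` is infected by the DES only, along
a walk from an infected node whose timers sum to at most `h`. Shortened to a path starting at `j`,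
that walk has at least two edges (the first neighbour of `j` cannot be infected, or the DTS would
infect `j` too), and its first two edges, which are distinct, both carry timers at most `h`. By
independence this has probability at most `h²` for each of the at most `k (k - 1)` paths of length
two from `j`, so `E ‖g̃(x,A) - g(x,A)‖₁ ≤ n k (k - 1) h² ≤ n k² e^(k-2) h²`.
-/

open MeasureTheory ProbabilityTheory Real

/-- View a Boolean infection state as a real number (`true ↦ 1`, `false ↦ 0`). -/
def boolToR (b : Bool) : ℝ := if b then 1 else 0

open Classical in
/-- One step of the SI discrete-time simulation (DTS): node `j` is infected afterwards iff
it was infected, or some infected neighbor's edge timer fires within time `h`. -/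
noncomputable def siDTS {V : Type*} (G : SimpleGraph V) (h : ℝ) (x : V → Bool)
    (a : G.edgeSet → ℝ) : V → Bool := fun j =>
  if x j = true ∨ ∃ j', ∃ hadj : G.Adj j j',
      x j' = true ∧ a ⟨s(j, j'), (SimpleGraph.mem_edgeSet G).mpr hadj⟩ ≤ h
  then true else false

open Classical in
/-- State at time `h` of the SI discrete-event simulation (DES) started at `x` with edge
timers `a`, via the first-passage-percolation description: node `j` is infected iff it was
infected, or there is a path from an infected node to `j` whose timers sum to at most `h`. -/
noncomputable def siDES {V : Type*} (G : SimpleGraph V) (h : ℝ) (x : V → Bool)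
    (a : G.edgeSet → ℝ) : V → Bool := fun j =>
  if x j = true ∨ ∃ j₀, ∃ p : G.Walk j₀ j, x j₀ = true ∧
      (p.edges.attach.map fun e => a ⟨e.1, p.edges_subset_edgeSet e.2⟩).sum ≤ h
  then true else false

namespace SimpleGraph

variable {V : Type*} (G : SimpleGraph V)

open Classical in
/-- Edge timers extended by `0` to all of `Sym2 V`, so that timers along a walk need no
membership proofs. -/
noncomputable def extTimer (a : G.edgeSet → ℝ) (e : Sym2 V) : ℝ :=
  if he : e ∈ G.edgeSet then a ⟨e, he⟩ else 0

open Classical in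
noncomputable def lengthTwoPaths [Fintype V] (j : V) : Finset (V × V) :=
  Finset.univ.filter fun q => G.Adj j q.1 ∧ G.Adj q.1 q.2 ∧ q.2 ≠ j

def lengthTwoPathFires (h : ℝ) (j : V) (q : V × V) : Set (G.edgeSet → ℝ) :=
  {a | G.extTimer a s(j, q.1) ≤ h ∧ G.extTimer a s(q.1, q.2) ≤ h}

variable {G}

lemma extTimer_of_mem (a : G.edgeSet → ℝ) {e : Sym2 V} (he : e ∈ G.edgeSet) :
    G.extTimer a e = a ⟨e, he⟩ :=
  dif_pos he

lemma extTimer_nonneg {a : G.edgeSet → ℝ} (ha : ∀ e, 0 ≤ a e) (e : Sym2 V) :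
    0 ≤ G.extTimer a e := by
  unfold extTimer; split <;> simp [ha]

lemma sum_map_attach_edges_eq (a : G.edgeSet → ℝ) {u v : V} (p : G.Walk u v) :
    (p.edges.attach.map fun e => a ⟨e.1, p.edges_subset_edgeSet e.2⟩).sum =
      (p.edges.map (G.extTimer a)).sum := by
  conv_rhs => rw [← List.attach_map_subtype_val p.edges, List.map_map]
  congr 2
  funext e
  exact (extTimer_of_mem a (p.edges_subset_edgeSet e.2)).symm

lemma card_lengthTwoPaths_le [Fintype V] {k : ℕ} (hdeg : ∀ v, (G.neighborSet v).ncard ≤ k)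
    (j : V) : (G.lengthTwoPaths j).card ≤ k * (k - 1) := by
  classical
  have hdeg' : ∀ v, (G.neighborFinset v).card ≤ k := fun v => by
    rw [← Set.ncard_coe_finset, coe_neighborFinset]
    exact hdeg v
  have hsub : G.lengthTwoPaths j ⊆ (G.neighborFinset j).biUnion
      fun j' => ((G.neighborFinset j').erase j).image (Prod.mk j') := by
    rintro ⟨j', j''⟩ hq
    simp only [lengthTwoPaths, Finset.mem_filter, Finset.mem_univ, true_and] at hq
    simp [hq.1, hq.2.1, hq.2.2]
  refine (Finset.card_le_card hsub).trans <|
    (Finset.card_biUnion_le_card_mul _ _ (k - 1) fun j' hj' => ?_).trans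
      (Nat.mul_le_mul_right _ (hdeg' j))
  rw [mem_neighborFinset] at hj'
  calc _ ≤ ((G.neighborFinset j').erase j).card := Finset.card_image_le
    _ = (G.neighborFinset j').card - 1 := Finset.card_erase_of_mem (by simpa using hj'.symm)
    _ ≤ k - 1 := Nat.sub_le_sub_right (hdeg' j') 1

end SimpleGraph

open SimpleGraph

section Infection

variable {V : Type*} {G : SimpleGraph V} {h : ℝ} {x : V → Bool} {a : G.edgeSet → ℝ} {j : V}

lemma siDTS_eq_true_iff : siDTS G h x a j = true ↔
    x j = true ∨ ∃ j', G.Adj j j' ∧ x j' = true ∧ G.extTimer a s(j, j') ≤ h := by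
  unfold siDTS
  simp only [Bool.ite_eq_true_distrib, Bool.false_eq_true, if_false_right, and_true]
  refine or_congr Iff.rfl (exists_congr fun j' => ?_)
  exact ⟨fun ⟨hadj, hx, hle⟩ => ⟨hadj, hx, (extTimer_of_mem a _).trans_le hle⟩,
    fun ⟨hadj, hx, hle⟩ => ⟨hadj, hx, (extTimer_of_mem a _).symm.trans_le hle⟩⟩

lemma siDES_eq_true_iff : siDES G h x a j = true ↔
    x j = true ∨ ∃ j₀, ∃ p : G.Walk j₀ j, x j₀ = true ∧ (p.edges.map (G.extTimer a)).sum ≤ h := by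
  unfold siDES
  simp only [Bool.ite_eq_true_distrib, Bool.false_eq_true, if_false_right, and_true,
    sum_map_attach_edges_eq]

lemma siDES_of_siDTS (hj : siDTS G h x a j = true) : siDES G h x a j = true := by
  rw [siDTS_eq_true_iff] at hj
  rw [siDES_eq_true_iff]
  rcases hj with hxj | ⟨j', hadj, hxj', hle⟩
  · exact Or.inl hxj
  · refine Or.inr ⟨j', Walk.cons hadj.symm Walk.nil, hxj', ?_⟩
    simpa [Sym2.eq_swap] using hle

lemma exists_adj_adj_of_siDES_of_not_siDTS (ha : ∀ e, 0 ≤ a e)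
    (hdes : siDES G h x a j = true) (hdts : siDTS G h x a j = false) :
    ∃ j' j'', G.Adj j j' ∧ G.Adj j' j'' ∧ j'' ≠ j ∧
      G.extTimer a s(j, j') ≤ h ∧ G.extTimer a s(j', j'') ≤ h := by
  classical
  have hdts' := hdts ▸ Bool.false_ne_true
  rw [Ne, siDTS_eq_true_iff, not_or, not_exists] at hdts'
  obtain ⟨hxj, hnb⟩ := hdts'
  obtain ⟨j₀, p, hx₀, hp⟩ := (siDES_eq_true_iff.mp hdes).resolve_left hxj
  set q := p.reverse.bypass
  have hq : q.IsPath := p.reverse.bypass_isPath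
  have hle : ∀ e ∈ q.edges, G.extTimer a e ≤ h := fun e he =>
    calc G.extTimer a e ≤ (q.edges.map (G.extTimer a)).sum :=
          List.single_le_sum (by simp [extTimer_nonneg ha]) _ (List.mem_map_of_mem he)
      _ ≤ (p.reverse.edges.map (G.extTimer a)).sum :=
          ((p.reverse.edges_bypass_sublist_edges).map _).sum_le_sum (by simp [extTimer_nonneg ha])
      _ = (p.edges.map (G.extTimer a)).sum := by simp
      _ ≤ h := hp
  clear_value q
  cases q with
  | nil => exact absurd hx₀ hxj
  | @cons _ j' _ hadj q' =>
    have hxj' : x j' ≠ true := fun hx => hnb j' ⟨hadj, hx, hle _ (by simp)⟩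
    cases q' with
    | nil => exact absurd hx₀ hxj'
    | @cons _ j'' _ hadj' q'' =>
      refine ⟨j', j'', hadj, hadj', ?_, hle _ (by simp), hle _ (by simp)⟩
      rintro rfl
      simp at hq

lemma abs_boolToR_siDES_sub_siDTS_le [Fintype V] (ha : ∀ e, 0 ≤ a e) :
    |boolToR (siDES G h x a j) - boolToR (siDTS G h x a j)| ≤
      ∑ q ∈ G.lengthTwoPaths j, (G.lengthTwoPathFires h j q).indicator 1 a := by
  have hterm (q : V × V) : (0 : ℝ) ≤ (G.lengthTwoPathFires h j q).indicator 1 a :=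
    Set.indicator_nonneg (fun _ _ => zero_le_one) a
  have hsum_nonneg := Finset.sum_nonneg fun q (_ : q ∈ G.lengthTwoPaths j) => hterm q
  cases hdes : siDES G h x a j <;> cases hdts : siDTS G h x a j
  · simpa only [boolToR, sub_self, abs_zero] using hsum_nonneg
  · simpa [hdes] using siDES_of_siDTS hdts
  · obtain ⟨j', j'', hadj, hadj', hne, hle, hle'⟩ :=
      exists_adj_adj_of_siDES_of_not_siDTS ha hdes hdts
    have hmem : (j', j'') ∈ G.lengthTwoPaths j := by
      simp [lengthTwoPaths, hadj, hadj', hne]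
    have hfires : a ∈ G.lengthTwoPathFires h j (j', j'') := ⟨hle, hle'⟩
    simpa [boolToR, Set.indicator_of_mem hfires] using
      Finset.single_le_sum (fun q _ => hterm q) hmem
  · simpa only [boolToR, sub_self, abs_zero] using hsum_nonneg

end Infection

open Set

lemma expMeasure_real_Iic_le {r t : ℝ} (hr : 0 < r) (ht : 0 ≤ t) :
    (expMeasure r).real (Iic t) ≤ r * t := by
  have := isProbabilityMeasure_expMeasure hr
  rw [← cdf_eq_real, cdf_expMeasure_eq hr, if_pos ht]
  linarith [Real.add_one_le_exp (-(r * t))]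

lemma ae_nonneg_expMeasure (r : ℝ) : ∀ᵐ y ∂expMeasure r, 0 ≤ y := by
  rw [ae_iff]
  simp only [not_le]
  change gammaMeasure 1 r (Iio 0) = 0
  rw [gammaMeasure, withDensity_apply _ measurableSet_Iio]
  exact lintegral_exponentialPDF_of_nonpos le_rfl

section ExponentialFamily

variable {Ω ι : Type*} [MeasurableSpace Ω] {μ : Measure Ω} {X : ι → Ω → ℝ} {r : ℝ}

lemma ae_forall_nonneg_of_map_eq_expMeasure [Countable ι] (hX : ∀ i, Measurable (X i))
    (hdist : ∀ i, μ.map (X i) = expMeasure r) : ∀ᵐ ω ∂μ, ∀ i, 0 ≤ X i ω :=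
  ae_all_iff.mpr fun i =>
    ae_of_ae_map (hX i).aemeasurable (by simpa only [hdist i] using ae_nonneg_expMeasure r)

lemma ProbabilityTheory.iIndepFun.measureReal_le_and_le_le_sq [IsProbabilityMeasure μ]
    (hind : iIndepFun X μ) (hX : ∀ i, Measurable (X i)) (hdist : ∀ i, μ.map (X i) = expMeasure r)
    (hr : 0 < r) {i i' : ι} (hii' : i ≠ i') {t : ℝ} (ht : 0 ≤ t) :
    μ.real {ω | X i ω ≤ t ∧ X i' ω ≤ t} ≤ (r * t) ^ 2 := by
  have hmarg : ∀ i, μ.real (X i ⁻¹' Iic t) ≤ r * t := fun i => by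
    rw [← map_measureReal_apply (hX i) measurableSet_Iic, hdist i]
    exact expMeasure_real_Iic_le hr ht
  rw [show {ω | X i ω ≤ t ∧ X i' ω ≤ t} = X i ⁻¹' Iic t ∩ X i' ⁻¹' Iic t from rfl,
    measureReal_def, (hind.indepFun hii').measure_inter_preimage_eq_mul _ _ measurableSet_Iic
      measurableSet_Iic, ENNReal.toReal_mul, ← measureReal_def, ← measureReal_def, sq]
  exact mul_le_mul (hmarg i) (hmarg i') measureReal_nonneg (by positivity)

end ExponentialFamily

namespace SimpleGraph

variable {V : Type*} {G : SimpleGraph V} {h : ℝ}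
  {Ω : Type*} [MeasurableSpace Ω] {μ : Measure Ω} {A : Ω → G.edgeSet → ℝ}

lemma measurable_extTimer (hA : ∀ e, Measurable fun ω => A ω e) (e : Sym2 V) :
    Measurable fun ω => G.extTimer (A ω) e := by
  by_cases he : e ∈ G.edgeSet
  · simpa only [extTimer_of_mem _ he] using hA ⟨e, he⟩
  · simpa only [extTimer, dif_neg he] using measurable_const

lemma measurableSet_preimage_lengthTwoPathFires (hA : ∀ e, Measurable fun ω => A ω e)
    (j : V) (q : V × V) : MeasurableSet (A ⁻¹' G.lengthTwoPathFires h j q) :=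
  (measurableSet_le (measurable_extTimer hA _) measurable_const).inter
    (measurableSet_le (measurable_extTimer hA _) measurable_const)

variable [Fintype V]

lemma integral_sum_abs_siDES_sub_siDTS_le [IsFiniteMeasure μ]
    (hA : ∀ e, Measurable fun ω => A ω e) (hnn : ∀ᵐ ω ∂μ, ∀ e, 0 ≤ A ω e) (x : V → Bool) :
    ∫ ω, ∑ j, |boolToR (siDES G h x (A ω) j) - boolToR (siDTS G h x (A ω) j)| ∂μ ≤
      ∑ j, ∑ q ∈ G.lengthTwoPaths j, μ.real (A ⁻¹' G.lengthTwoPathFires h j q) := by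
  have hint (j : V) (q : V × V) :
      Integrable ((A ⁻¹' G.lengthTwoPathFires h j q).indicator (1 : Ω → ℝ)) μ :=
    (integrable_const 1).indicator (measurableSet_preimage_lengthTwoPathFires hA j q)
  calc _ ≤ ∫ ω, ∑ j, ∑ q ∈ G.lengthTwoPaths j,
        (A ⁻¹' G.lengthTwoPathFires h j q).indicator (1 : Ω → ℝ) ω ∂μ :=
        integral_mono_of_nonneg (.of_forall fun ω => by positivity)
          (integrable_finsetSum _ fun j _ => integrable_finsetSum _ fun q _ => hint j q)
          (hnn.mono fun ω hω => Finset.sum_le_sum fun j _ => abs_boolToR_siDES_sub_siDTS_le hω)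
    _ = _ := by
        rw [integral_finsetSum _ fun j _ => integrable_finsetSum _ fun q _ => hint j q]
        refine Finset.sum_congr rfl fun j _ => ?_
        rw [integral_finsetSum _ fun q _ => hint j q]
        exact Finset.sum_congr rfl fun q _ =>
          integral_indicator_one (measurableSet_preimage_lengthTwoPathFires hA j q)

lemma measureReal_preimage_lengthTwoPathFires_le [IsProbabilityMeasure μ]
    (hA : ∀ e, Measurable fun ω => A ω e) (hind : iIndepFun (fun e ω => A ω e) μ)
    (hdist : ∀ e, μ.map (fun ω => A ω e) = expMeasure 1) (h0 : 0 ≤ h) {j : V} {q : V × V}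
    (hq : q ∈ G.lengthTwoPaths j) : μ.real (A ⁻¹' G.lengthTwoPathFires h j q) ≤ h ^ 2 := by
  simp only [lengthTwoPaths, Finset.mem_filter, Finset.mem_univ, true_and] at hq
  obtain ⟨hadj, hadj', hne⟩ := hq
  have he : s(j, q.1) ∈ G.edgeSet := hadj
  have he' : s(q.1, q.2) ∈ G.edgeSet := hadj'
  have hedges : (⟨_, he⟩ : G.edgeSet) ≠ ⟨_, he'⟩ := by
    rw [Ne, Subtype.mk.injEq, Sym2.eq_iff]
    rintro (⟨hj, -⟩ | ⟨hj, -⟩)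
    exacts [hadj.ne hj, hne hj.symm]
  have hset : A ⁻¹' G.lengthTwoPathFires h j q =
      {ω | A ω ⟨_, he⟩ ≤ h ∧ A ω ⟨_, he'⟩ ≤ h} := by
    ext ω
    change _ ∧ _ ↔ _ ∧ _
    rw [extTimer_of_mem (A ω) he, extTimer_of_mem (A ω) he']
  simpa [hset] using hind.measureReal_le_and_le_le_sq hA hdist one_pos hedges h0

end SimpleGraph

lemma natCast_mul_pred_le_sq_mul_exp (k : ℕ) :
    ((k * (k - 1) : ℕ) : ℝ) ≤ (k : ℝ) ^ 2 * Real.exp ((k : ℝ) - 2) := by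
  rcases k with _ | k
  · simp
  have hk : (0 : ℝ) ≤ k := k.cast_nonneg
  have hexp : (k : ℝ) ≤ Real.exp ((k + 1 : ℕ) - 2 : ℝ) := by
    linarith [Real.add_one_le_exp ((k + 1 : ℕ) - 2 : ℝ),
      show ((k + 1 : ℕ) : ℝ) = k + 1 by push_cast; ring]
  push_cast at hexp ⊢
  nlinarith [mul_le_mul_of_nonneg_left hexp (sq_nonneg ((k : ℝ) + 1)),
    mul_nonneg (mul_nonneg hk hk) (by linarith : (0 : ℝ) ≤ k + 1)]

theorem si_local_error_bound {Ω : Type*} [MeasureSpace Ω]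
    [IsProbabilityMeasure (ℙ : Measure Ω)]
    {V : Type*} [Fintype V] (G : SimpleGraph V) (k : ℕ)
    (hdeg : ∀ j : V, (G.neighborSet j).ncard ≤ k)
    (h : ℝ) (h0 : 0 < h)
    (A : Ω → G.edgeSet → ℝ)
    (hAmeas : ∀ e : G.edgeSet, Measurable fun ω => A ω e)
    (hAindep : iIndepFun (fun (e : G.edgeSet) ω => A ω e) ℙ)
    (hAdist : ∀ e : G.edgeSet, Measure.map (fun ω => A ω e) ℙ = expMeasure 1)
    (x : V → Bool) :
    ∫ ω, ∑ j : V, |boolToR (siDES G h x (A ω) j) - boolToR (siDTS G h x (A ω) j)| ∂ℙ ≤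
      (Fintype.card V : ℝ) * (k : ℝ) ^ 2 * Real.exp ((k : ℝ) - 2) * h ^ 2 := by
  have hnn := ae_forall_nonneg_of_map_eq_expMeasure (μ := ℙ) hAmeas hAdist
  have hpaths (j : V) : ∑ q ∈ G.lengthTwoPaths j,
      (ℙ : Measure Ω).real (A ⁻¹' G.lengthTwoPathFires h j q) ≤ ((k * (k - 1) : ℕ) : ℝ) * h ^ 2 :=
    calc _ ≤ ∑ _q ∈ G.lengthTwoPaths j, h ^ 2 := Finset.sum_le_sum fun q hq =>
          measureReal_preimage_lengthTwoPathFires_le hAmeas hAindep hAdist h0.le hq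
      _ ≤ _ := by
          rw [Finset.sum_const, nsmul_eq_mul]
          gcongr
          exact_mod_cast card_lengthTwoPaths_le hdeg j
  calc _ ≤ ∑ j, ∑ q ∈ G.lengthTwoPaths j, (ℙ : Measure Ω).real
        (A ⁻¹' G.lengthTwoPathFires h j q) := integral_sum_abs_siDES_sub_siDTS_le hAmeas hnn x
    _ ≤ ∑ _j : V, ((k * (k - 1) : ℕ) : ℝ) * h ^ 2 := Finset.sum_le_sum fun j _ => hpaths j
    _ = Fintype.card V * (((k * (k - 1) : ℕ) : ℝ) * h ^ 2) := by
        rw [Finset.sum_const, Finset.card_univ, nsmul_eq_mul]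
    _ ≤ Fintype.card V * ((k : ℝ) ^ 2 * Real.exp ((k : ℝ) - 2) * h ^ 2) := by
        gcongr
        exact natCast_mul_pred_le_sq_mul_exp k
    _ = _ := by ring
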